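/- Let G be a metrizable topological group acting on a complete separable metric space Y by an action T : G × Y → Y that is continuous in the totality of its variables, let G₀ ⊆ G be a dense subgroup, let R : G × Y → [0,∞) be a Borel map satisfying the cocycle identity R(gh, y) = R(g, T(h,y))·R(h, y) for all g, h ∈ G and y ∈ Y, and let P be a Borel probability measure on Y. Assume: (1) for every g ∈ G₀, the pushforward measure (T_g)_*P is absolutely continuous with respect to P with density R(g, ·), i.e. (T_g)_*P = R(g,·)·P; (2) for every g ∈ G there exists a sequence (g_n) in G₀ with g_n → g in G and R(g_n, ·) → R(g, ·) P-almost surely. Then for every g ∈ G one has (T_g)_*P = R(g,·)·P. -/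

import Mathlib

open MeasureTheory Filter Topology
open scoped ENNReal NNReal BoundedContinuousFunction

private lemma dist2_triangle (a b c : ℝ≥0∞) :
    (a - c) + (c - a) ≤ ((a - b) + (b - a)) + ((b - c) + (c - b)) := by
  have h1 : a - c ≤ (a - b) + (b - c) := by
    rw [tsub_le_iff_right]
    calc a ≤ (a - b) + b := le_tsub_add
      _ ≤ (a - b) + ((b - c) + c) := add_le_add_right le_tsub_add _
      _ = (a - b) + (b - c) + c := (add_assoc _ _ _).symm
  have h2 : c - a ≤ (c - b) + (b - a) := by
    rw [tsub_le_iff_right]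
    calc c ≤ (c - b) + b := le_tsub_add
      _ ≤ (c - b) + ((b - a) + a) := add_le_add_right le_tsub_add _
      _ = (c - b) + (b - a) + a := (add_assoc _ _ _).symm
  calc (a - c) + (c - a) ≤ ((a - b) + (b - c)) + ((c - b) + (b - a)) := add_le_add h1 h2
    _ = ((a - b) + (b - a)) + ((b - c) + (c - b)) := by ac_rfl

private lemma trunc_dist_le {x w M : ℝ≥0∞} (hM : M ≠ ∞) :
    (min (w * x) M - min x M) + (min x M - min (w * x) M) ≤ M * (w - 1) + M * (1 - w) := by
  set a := min x M with ha
  set b := min (w * x) M with hb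
  have haM : a ≤ M := min_le_right _ _
  have haT : a ≠ ∞ := fun h => hM (top_le_iff.mp (h ▸ haM))
  have h1 : b ≤ a * (max w 1) := by
    rcases le_total x M with h | h
    · have : a = x := min_eq_left h
      rw [this]
      calc b ≤ w * x := min_le_left _ _
        _ = x * w := mul_comm _ _
        _ ≤ x * max w 1 := mul_le_mul_right (le_max_left _ _) _
    · have : a = M := min_eq_right h
      rw [this]
      calc b ≤ M := min_le_right _ _
        _ = M * 1 := (mul_one M).symm
        _ ≤ M * max w 1 := mul_le_mul_right (le_max_right _ _) _
  have h2 : a * (min w 1) ≤ b := by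
    rcases le_total x M with h | h
    · have hax : a = x := min_eq_left h
      rw [hax]
      refine le_min ?_ ?_
      · calc x * min w 1 ≤ x * w := mul_le_mul_right (min_le_left _ _) _
          _ = w * x := mul_comm _ _
      · calc x * min w 1 ≤ x * 1 := mul_le_mul_right (min_le_right _ _) _
          _ = x := mul_one x
          _ ≤ M := h
    · have hax : a = M := min_eq_right h
      rw [hax]
      refine le_min ?_ ?_
      · calc M * min w 1 ≤ x * min w 1 := mul_le_mul_left h _
          _ ≤ x * w := mul_le_mul_right (min_le_left _ _) _
          _ = w * x := mul_comm _ _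
      · calc M * min w 1 ≤ M * 1 := mul_le_mul_right (min_le_right _ _) _
          _ = M := mul_one M
  have hmax : max w 1 - 1 = w - 1 := by
    rcases le_total w 1 with h | h
    · rw [max_eq_right h, tsub_self, tsub_eq_zero_of_le h]
    · rw [max_eq_left h]
  have hmin : 1 - min w 1 = 1 - w := by
    rcases le_total w 1 with h | h
    · rw [min_eq_left h]
    · rw [min_eq_right h, tsub_self, tsub_eq_zero_of_le h]
  have hba : b - a ≤ M * (w - 1) := by
    calc b - a ≤ a * max w 1 - a * 1 := by
          rw [mul_one]; exact tsub_le_tsub_right h1 a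
      _ = a * (max w 1 - 1) := (ENNReal.mul_sub (fun _ _ => haT)).symm
      _ = a * (w - 1) := by rw [hmax]
      _ ≤ M * (w - 1) := mul_le_mul_left haM _
  have hab : a - b ≤ M * (1 - w) := by
    calc a - b ≤ a * 1 - a * min w 1 := by
          rw [mul_one]; exact tsub_le_tsub_left h2 a
      _ = a * (1 - min w 1) := (ENNReal.mul_sub (fun _ _ => haT)).symm
      _ = a * (1 - w) := by rw [hmin]
      _ ≤ M * (1 - w) := mul_le_mul_left haM _
  calc (b - a) + (a - b) ≤ M * (w - 1) + M * (1 - w) := add_le_add hba hab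

private lemma eq_of_min_nat_eq {a b : ℝ≥0∞} (ha : a ≠ ∞)
    (h : ∀ M : ℕ, min a (M : ℝ≥0∞) = min b (M : ℝ≥0∞)) : a = b := by
  by_cases hb : b = ∞
  · obtain ⟨n, hn⟩ := ENNReal.exists_nat_gt ha
    have h1 : min a (n : ℝ≥0∞) = a := min_eq_left hn.le
    have h2 : min b (n : ℝ≥0∞) = (n : ℝ≥0∞) := by rw [hb]; exact min_eq_right le_top
    have h3 : a = (n : ℝ≥0∞) := by rw [← h1, h n, h2]
    exact absurd hn (by rw [h3]; exact lt_irrefl _)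
  · obtain ⟨n, hn⟩ := ENNReal.exists_nat_gt (show max a b ≠ ∞ from by
      rw [max_def]; split <;> assumption)
    have hna : a < n := lt_of_le_of_lt (le_max_left a b) hn
    have hnb : b < n := lt_of_le_of_lt (le_max_right a b) hn
    have := h n
    rwa [min_eq_left hna.le, min_eq_left hnb.le] at this

private lemma restrict_false_null {Y : Type*} [MeasurableSpace Y] {μ : Measure Y} {S : Set Y}
    (h : ∀ᵐ y ∂μ.restrict S, False) : μ S = 0 := by
  have h2 : μ.restrict S Set.univ = 0 := by
    have := ae_iff.mp h
    simpa using this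
  rwa [Measure.restrict_apply_univ] at h2

private lemma measure_zero_of_lint_zero {Y : Type*} [MeasurableSpace Y] {μ : Measure Y}
    {W : Y → ℝ≥0∞} (hW : Measurable W) (hpos : ∀ᵐ y ∂μ, W y ≠ 0) {S : Set Y}
    (h0 : ∫⁻ y in S, W y ∂μ = 0) : μ S = 0 := by
  have h1 : W =ᵐ[μ.restrict S] 0 := (lintegral_eq_zero_iff hW).mp h0
  have h2 : ∀ᵐ y ∂μ.restrict S, W y ≠ 0 := ae_restrict_of_ae hpos
  exact restrict_false_null (by filter_upwards [h1, h2] with y hy1 hy2; exact hy2 hy1)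

private lemma ENNReal.inv_of_mul_eq_one {x d : ℝ≥0∞} (h : x * d = 1) :
    x = d⁻¹ ∧ d ≠ 0 ∧ d ≠ ∞ := by
  have hd0 : d ≠ 0 := by rintro rfl; simp at h
  have hdt : d ≠ ∞ := by
    rintro rfl
    rcases eq_or_ne x 0 with rfl | hx
    · simp at h
    · rw [ENNReal.mul_top hx] at h; exact (by simp : (⊤ : ℝ≥0∞) ≠ 1) h
  refine ⟨?_, hd0, hdt⟩
  calc x = x * (d * d⁻¹) := by rw [ENNReal.mul_inv_cancel hd0 hdt, mul_one]
    _ = (x * d) * d⁻¹ := by rw [mul_assoc]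
    _ = d⁻¹ := by rw [h, one_mul]

/-- approximation lemma for Radon–Nikodym cocycles of a continuous group action.
If the quasi-invariance identity `(T_g)_*P = R(g,·)·P` holds on a dense subgroup `G₀` and the
cocycle can be approximated along `G₀` almost surely, then the identity holds for all `g ∈ G`. -/
theorem stmt_15 (G : Type) [Group G] [TopologicalSpace G] [IsTopologicalGroup G]
    [TopologicalSpace.MetrizableSpace G]
    (Y : Type) [MetricSpace Y] [CompleteSpace Y] [TopologicalSpace.SeparableSpace Y]
    [MeasurableSpace Y] [BorelSpace Y]
    (T : G → Y → Y) (hT : Continuous fun p : G × Y => T p.1 p.2)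
    (hT1 : ∀ y, T 1 y = y) (hTmul : ∀ g h y, T (g * h) y = T g (T h y))
    (G₀ : Subgroup G) (hdense : Dense (G₀ : Set G))
    (R : G → Y → ℝ) [MeasurableSpace G] [BorelSpace G]
    (hRmeas : Measurable (Function.uncurry R)) (hRnn : ∀ g y, 0 ≤ R g y)
    (hcocycle : ∀ g h y, R (g * h) y = R g (T h y) * R h y)
    (μ : Measure Y) [IsProbabilityMeasure μ]
    (h1 : ∀ g ∈ G₀, Measure.map (T g) μ = μ.withDensity fun y => ENNReal.ofReal (R g y))
    (h2 : ∀ g : G, ∃ gs : ℕ → G, (∀ n, gs n ∈ G₀) ∧ Tendsto gs atTop (𝓝 g) ∧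
      ∀ᵐ y ∂μ, Tendsto (fun n => R (gs n) y) atTop (𝓝 (R g y))) :
    ∀ g : G, Measure.map (T g) μ = μ.withDensity fun y => ENNReal.ofReal (R g y) := by
  -- continuity and measurability of the action maps
  have hTc : ∀ γ : G, Continuous (T γ) := fun γ => hT.comp (Continuous.prodMk_right γ)
  have hTm : ∀ γ : G, Measurable (T γ) := fun γ => (hTc γ).measurable
  have hTinv₁ : ∀ (γ : G) (y : Y), T γ (T γ⁻¹ y) = y := fun γ y => by
    rw [← hTmul, mul_inv_cancel, hT1]
  have hTinv₂ : ∀ (γ : G) (y : Y), T γ⁻¹ (T γ y) = y := fun γ y => by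
    rw [← hTmul, inv_mul_cancel, hT1]
  -- the ℝ≥0∞-valued cocycle
  set r : G → Y → ℝ≥0∞ := fun γ y => ENNReal.ofReal (R γ y) with hr_def
  have hrm : ∀ γ, Measurable (r γ) := fun γ =>
    (hRmeas.comp (measurable_prodMk_left (x := γ))).ennreal_ofReal
  have hrfin : ∀ γ y, r γ y ≠ ∞ := fun γ y => ENNReal.ofReal_ne_top
  have hcoc : ∀ (α β : G) (y : Y), r (α * β) y = r α (T β y) * r β y := fun α β y => by
    simp only [hr_def]; rw [hcocycle, ENNReal.ofReal_mul (hRnn α (T β y))]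
  -- pushforward measures
  set ν : G → Measure Y := fun γ => μ.map (T γ) with hν_def
  have hνprob : ∀ γ, IsProbabilityMeasure (ν γ) := fun γ =>
    Measure.isProbabilityMeasure_map (hTm γ).aemeasurable
  have hνapp : ∀ (γ : G) (A : Set Y), MeasurableSet A → ν γ A = μ (T γ ⁻¹' A) := fun γ A hA =>
    Measure.map_apply (hTm γ) hA
  have hν1 : ν 1 = μ := by
    have hid : T 1 = id := funext hT1
    simp only [hν_def, hid, Measure.map_id]
  have hmapmap : ∀ α β : G, ν (α * β) = (ν β).map (T α) := by
    intro α β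
    have hcomp : T (α * β) = T α ∘ T β := funext (hTmul α β)
    simp only [hν_def, hcomp]
    rw [Measure.map_map (hTm α) (hTm β)]
  have h1' : ∀ h' ∈ G₀, ν h' = μ.withDensity (r h') := fun h' hh' => h1 h' hh'
  -- masses
  have hmass_eq : ∀ h' ∈ G₀, ∫⁻ y, r h' y ∂μ = 1 := by
    intro h' hh'
    have h0 : (μ.withDensity (r h')) Set.univ = 1 := by
      rw [← h1' h' hh']
      haveI := hνprob h'
      exact measure_univ
    rwa [withDensity_apply _ MeasurableSet.univ, setLIntegral_univ] at h0
  -- r 1 = 1 a.e.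
  have hr1 : r 1 =ᵐ[μ] 1 := by
    have h₀ : μ.withDensity (r 1) = μ := by rw [← h1' 1 (Subgroup.one_mem G₀), hν1]
    have h₁ := Measure.rnDeriv_withDensity μ (hrm 1)
    rw [h₀] at h₁
    exact h₁.symm.trans (Measure.rnDeriv_self μ)
  have hrpos : ∀ γ : G, ∀ᵐ y ∂μ, r γ y ≠ 0 := by
    intro γ
    filter_upwards [hr1] with y hy h0
    have hc := hcoc γ⁻¹ γ y
    rw [inv_mul_cancel, h0, mul_zero, hy] at hc
    exact one_ne_zero hc
  -- h2, ℝ≥0∞ version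
  have h2' : ∀ γ : G, ∃ us : ℕ → G, (∀ n, us n ∈ G₀) ∧ Tendsto us atTop (𝓝 γ) ∧
      ∀ᵐ y ∂μ, Tendsto (fun n => r (us n) y) atTop (𝓝 (r γ y)) := by
    intro γ
    obtain ⟨us, hu0, hu1, hu2⟩ := h2 γ
    exact ⟨us, hu0, hu1, hu2.mono fun y hy => ENNReal.tendsto_ofReal hy⟩
  -- mass bound for every γ
  have hmass_le : ∀ γ : G, ∫⁻ y, r γ y ∂μ ≤ 1 := by
    intro γ
    obtain ⟨us, hu0, hu1, hu2⟩ := h2' γ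
    have hliminf : (fun y => r γ y) =ᵐ[μ] fun y => liminf (fun n => r (us n) y) atTop :=
      hu2.mono fun y hy => hy.liminf_eq.symm
    calc ∫⁻ y, r γ y ∂μ = ∫⁻ y, liminf (fun n => r (us n) y) atTop ∂μ :=
          lintegral_congr_ae hliminf
      _ ≤ liminf (fun n => ∫⁻ y, r (us n) y ∂μ) atTop := lintegral_liminf_le fun n => hrm (us n)
      _ = 1 := by
          have he : (fun n => ∫⁻ y, r (us n) y ∂μ) = fun _ => (1 : ℝ≥0∞) :=
            funext fun n => hmass_eq _ (hu0 n)
          rw [he, liminf_const]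
  -- the fundamental inequality
  have hstar : ∀ γ : G, μ.withDensity (r γ) ≤ ν γ := by
    intro γ
    obtain ⟨us, hu0, hu1, hu2⟩ := h2' γ
    haveI : IsFiniteMeasure (μ.withDensity (r γ)) := by
      constructor
      rw [withDensity_apply _ MeasurableSet.univ, setLIntegral_univ]
      exact lt_of_le_of_lt (hmass_le γ) ENNReal.one_lt_top
    -- key inequality against bounded continuous functions
    have key : ∀ f : Y →ᵇ ℝ≥0, (∀ y, f y ≤ 1) →
        (∫⁻ y, (f y : ℝ≥0∞) * r γ y ∂μ) ≤ ∫⁻ y, (f y : ℝ≥0∞) ∂(ν γ) := by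
      intro f hf1
      have hfm : Measurable fun y => (f y : ℝ≥0∞) :=
        (ENNReal.continuous_coe.comp f.continuous).measurable
      have heq : ∀ n, ∫⁻ y, (f y : ℝ≥0∞) * r (us n) y ∂μ
          = ∫⁻ y, (f (T (us n) y) : ℝ≥0∞) ∂μ := by
        intro n
        have hmap : ∫⁻ y, (f (T (us n) y) : ℝ≥0∞) ∂μ = ∫⁻ y, (f y : ℝ≥0∞) ∂(ν (us n)) := by
          simp only [hν_def]
          exact (lintegral_map hfm (hTm (us n))).symm
        rw [hmap, h1' _ (hu0 n), lintegral_withDensity_eq_lintegral_mul μ (hrm (us n)) hfm]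
        exact lintegral_congr fun y => mul_comm _ _
      have hlim : Tendsto (fun n => ∫⁻ y, (f (T (us n) y) : ℝ≥0∞) ∂μ) atTop
          (𝓝 (∫⁻ y, (f (T γ y) : ℝ≥0∞) ∂μ)) := by
        refine tendsto_lintegral_of_dominated_convergence (fun _ => (1 : ℝ≥0∞))
          (fun n => hfm.comp (hTm (us n))) (fun n => Filter.Eventually.of_forall fun y => ?_)
          (by simp) (Filter.Eventually.of_forall fun y => ?_)
        · exact ENNReal.coe_le_one_iff.mpr (hf1 (T (us n) y))
        · have h₁ : Tendsto (fun n => (us n, y)) atTop (𝓝 (γ, y)) :=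
            hu1.prodMk_nhds tendsto_const_nhds
          have h₂ : Tendsto (fun n => T (us n) y) atTop (𝓝 (T γ y)) :=
            (hT.tendsto (γ, y)).comp h₁
          exact (ENNReal.continuous_coe.tendsto _).comp ((f.continuous.tendsto _).comp h₂)
      have hfatou : (∫⁻ y, (f y : ℝ≥0∞) * r γ y ∂μ)
          ≤ liminf (fun n => ∫⁻ y, (f y : ℝ≥0∞) * r (us n) y ∂μ) atTop := by
        have hae : (fun y => (f y : ℝ≥0∞) * r γ y)
            =ᵐ[μ] fun y => liminf (fun n => (f y : ℝ≥0∞) * r (us n) y) atTop := by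
          filter_upwards [hu2] with y hy
          exact ((ENNReal.Tendsto.const_mul hy (Or.inr ENNReal.coe_ne_top)).liminf_eq).symm
        calc (∫⁻ y, (f y : ℝ≥0∞) * r γ y ∂μ)
            = ∫⁻ y, liminf (fun n => (f y : ℝ≥0∞) * r (us n) y) atTop ∂μ :=
              lintegral_congr_ae hae
          _ ≤ liminf (fun n => ∫⁻ y, (f y : ℝ≥0∞) * r (us n) y ∂μ) atTop :=
              lintegral_liminf_le fun n => hfm.mul (hrm (us n))
      have hlimeq : liminf (fun n => ∫⁻ y, (f y : ℝ≥0∞) * r (us n) y ∂μ) atTop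
          = ∫⁻ y, (f (T γ y) : ℝ≥0∞) ∂μ := by
        have : (fun n => ∫⁻ y, (f y : ℝ≥0∞) * r (us n) y ∂μ)
            = fun n => ∫⁻ y, (f (T (us n) y) : ℝ≥0∞) ∂μ := funext heq
        rw [this]
        exact hlim.liminf_eq
      have hend : ∫⁻ y, (f (T γ y) : ℝ≥0∞) ∂μ = ∫⁻ y, (f y : ℝ≥0∞) ∂(ν γ) := by
        simp only [hν_def]
        exact (lintegral_map hfm (hTm γ)).symm
      rw [← hend]
      exact le_trans hfatou (le_of_eq hlimeq)
    -- closed sets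
    have hclosed : ∀ C : Set Y, IsClosed C → μ.withDensity (r γ) C ≤ ν γ C := by
      intro C hC
      have δpos : ∀ n : ℕ, 0 < (1 : ℝ) / (n + 1) := fun n => by positivity
      have δlim : Tendsto (fun n : ℕ => (1 : ℝ) / (n + 1)) atTop (𝓝 0) :=
        tendsto_one_div_add_atTop_nhds_zero_nat
      have h_each : ∀ n : ℕ, μ.withDensity (r γ) C
          ≤ ∫⁻ y, ((thickenedIndicator (δpos n) C y : ℝ≥0) : ℝ≥0∞) ∂(ν γ) := by
        intro n
        have h0 : μ.withDensity (r γ) C = ∫⁻ y in C, r γ y ∂μ :=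
          withDensity_apply _ hC.measurableSet
        have h1c : ∫⁻ y in C, r γ y ∂μ
            ≤ ∫⁻ y, ((thickenedIndicator (δpos n) C y : ℝ≥0) : ℝ≥0∞) * r γ y ∂μ := by
          rw [← lintegral_indicator hC.measurableSet]
          refine lintegral_mono fun y => ?_
          by_cases hy : y ∈ C
          · rw [Set.indicator_of_mem hy, thickenedIndicator_one (δpos n) C hy]
            simp
          · rw [Set.indicator_of_notMem hy]
            exact zero_le
        rw [h0]
        exact h1c.trans (key _ fun y => thickenedIndicator_le_one (δpos n) C y)
      have hlim2 : Tendsto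
          (fun n => ∫⁻ y, ((thickenedIndicator (δpos n) C y : ℝ≥0) : ℝ≥0∞) ∂(ν γ)) atTop
          (𝓝 (ν γ C)) := by
        have hpt := thickenedIndicator_tendsto_indicator_closure δpos δlim C
        rw [tendsto_pi_nhds] at hpt
        have hDC : Tendsto
            (fun n => ∫⁻ y, ((thickenedIndicator (δpos n) C y : ℝ≥0) : ℝ≥0∞) ∂(ν γ)) atTop
            (𝓝 (∫⁻ y, ((Set.indicator (closure C) (fun _ => (1 : ℝ≥0)) y : ℝ≥0) : ℝ≥0∞)
              ∂(ν γ))) := by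
          haveI := hνprob γ
          refine tendsto_lintegral_of_dominated_convergence (fun _ => (1 : ℝ≥0∞))
            (fun n => (ENNReal.continuous_coe.comp
              (thickenedIndicator (δpos n) C).continuous).measurable)
            (fun n => Filter.Eventually.of_forall fun y => ?_) (by simp)
            (Filter.Eventually.of_forall fun y => ?_)
          · exact ENNReal.coe_le_one_iff.mpr (thickenedIndicator_le_one (δpos n) C y)
          · exact (ENNReal.continuous_coe.tendsto _).comp (hpt y)
        have hval : ∫⁻ y, ((Set.indicator (closure C) (fun _ => (1 : ℝ≥0)) y : ℝ≥0) : ℝ≥0∞)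
            ∂(ν γ) = ν γ C := by
          have hind : (fun y => ((Set.indicator (closure C) (fun _ => (1 : ℝ≥0)) y : ℝ≥0)
              : ℝ≥0∞)) = (closure C).indicator (fun _ => (1 : ℝ≥0∞)) := by
            funext y
            by_cases hy : y ∈ closure C
            · simp [hy]
            · simp [hy]
          rw [hind, hC.closure_eq, lintegral_indicator hC.measurableSet, setLIntegral_one]
        rwa [hval] at hDC
      exact ge_of_tendsto' hlim2 h_each
    -- general measurable sets via inner regularity
    rw [Measure.le_iff]
    intro A hA
    by_contra hlt
    push_neg at hlt
    obtain ⟨K, hKA, hKc, hK⟩ := MeasurableSet.exists_lt_isClosed_of_ne_top hA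
      (measure_ne_top _ A) hlt
    exact absurd ((hclosed K hKc).trans (measure_mono hKA)) (not_le.mpr hK)
  -- absolute continuity
  have hac : ∀ γ : G, ν γ ≪ μ := by
    intro γ
    refine Measure.AbsolutelyContinuous.mk fun A hA hA0 => ?_
    rw [hνapp γ A hA]
    have hBm : MeasurableSet (T γ ⁻¹' A) := (hTm γ) hA
    have h₁ : (μ.withDensity (r γ⁻¹)) (T γ ⁻¹' A) ≤ ν γ⁻¹ (T γ ⁻¹' A) :=
      Measure.le_iff.mp (hstar γ⁻¹) _ hBm
    have h₂ : ν γ⁻¹ (T γ ⁻¹' A) = 0 := by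
      rw [hνapp γ⁻¹ _ hBm]
      have hpre : T γ⁻¹ ⁻¹' (T γ ⁻¹' A) = A := by
        ext y
        simp only [Set.mem_preimage, hTinv₁ γ y]
      rw [hpre, hA0]
    rw [h₂, le_zero_iff, withDensity_apply _ hBm] at h₁
    exact measure_zero_of_lint_zero (hrm γ⁻¹) (hrpos γ⁻¹) h₁
  -- Radon-Nikodym densities
  set D : G → Y → ℝ≥0∞ := fun γ => (ν γ).rnDeriv μ with hD_def
  have hDm : ∀ γ, Measurable (D γ) := fun γ => Measure.measurable_rnDeriv _ _
  have hDeq : ∀ γ, μ.withDensity (D γ) = ν γ := fun γ =>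
    Measure.withDensity_rnDeriv_eq _ _ (hac γ)
  have hDfin : ∀ γ, ∀ᵐ y ∂μ, D γ y ≠ ∞ := by
    intro γ
    haveI := hνprob γ
    filter_upwards [Measure.rnDeriv_lt_top (ν γ) μ] with y hy using hy.ne
  have hDmass : ∀ γ, ∫⁻ y, D γ y ∂μ = 1 := by
    intro γ
    have h0 : μ.withDensity (D γ) Set.univ = 1 := by
      rw [hDeq]
      haveI := hνprob γ
      exact measure_univ
    rwa [withDensity_apply _ MeasurableSet.univ, setLIntegral_univ] at h0
  -- r ≤ D a.e.
  have hrleD : ∀ γ, r γ ≤ᵐ[μ] D γ := by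
    intro γ
    have hEm : MeasurableSet {y | D γ y < r γ y} := measurableSet_lt (hDm γ) (hrm γ)
    set E := {y | D γ y < r γ y} with hE
    have hle : ∫⁻ y in E, r γ y ∂μ ≤ ∫⁻ y in E, D γ y ∂μ := by
      rw [← withDensity_apply _ hEm, ← withDensity_apply _ hEm]
      exact Measure.le_iff.mp ((hstar γ).trans_eq (hDeq γ).symm) E hEm
    have hrfinE : ∫⁻ y in E, r γ y ∂μ ≠ ∞ :=
      (lt_of_le_of_lt (le_trans (setLIntegral_le_lintegral _ _) (hmass_le γ))
        ENNReal.one_lt_top).ne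
    have hDfinE : ∫⁻ y in E, D γ y ∂μ ≠ ∞ := by
      refine (lt_of_le_of_lt (le_trans (setLIntegral_le_lintegral _ _) ?_)
        ENNReal.one_lt_top).ne
      rw [hDmass γ]
    have haeE : D γ ≤ᵐ[μ.restrict E] r γ := by
      filter_upwards [ae_restrict_mem hEm] with y hy
      exact le_of_lt hy
    have hge : ∫⁻ y in E, D γ y ∂μ ≤ ∫⁻ y in E, r γ y ∂μ := lintegral_mono_ae haeE
    have heq : ∫⁻ y in E, r γ y ∂μ = ∫⁻ y in E, D γ y ∂μ := le_antisymm hle hge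
    have hsub : ∫⁻ y in E, (r γ y - D γ y) ∂μ = 0 := by
      rw [lintegral_sub (hDm γ) hDfinE haeE, heq, tsub_self]
    have h0' : (fun y => r γ y - D γ y) =ᵐ[μ.restrict E] 0 :=
      (lintegral_eq_zero_iff ((hrm γ).sub (hDm γ))).mp hsub
    have hEnull : μ E = 0 := by
      refine restrict_false_null ?_
      filter_upwards [h0', ae_restrict_mem hEm] with y hy1 hy2
      exact absurd (tsub_eq_zero_iff_le.mp hy1) (not_le.mpr hy2)
    rw [Filter.EventuallyLE, ae_iff]
    have hset : {y | ¬ r γ y ≤ D γ y} = E := by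
      ext y; simp only [hE, Set.mem_setOf_eq, not_le]
    rw [hset]
    exact hEnull
  -- change of variables
  have hCoV : ∀ (δ : G) (F : Y → ℝ≥0∞), Measurable F →
      ∫⁻ y, F (T δ y) ∂μ = ∫⁻ y, D δ y * F y ∂μ := by
    intro δ F hF
    have h₁ : ∫⁻ y, F (T δ y) ∂μ = ∫⁻ y, F y ∂(ν δ) := (lintegral_map hF (hTm δ)).symm
    rw [h₁, ← hDeq δ, lintegral_withDensity_eq_lintegral_mul μ (hDm δ) hF]
    rfl
  -- map of a withDensity measure
  have hmapwd : ∀ (α : G) (f : Y → ℝ≥0∞), Measurable f →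
      (μ.withDensity f).map (T α) = (ν α).withDensity (fun y => f (T α⁻¹ y)) := by
    intro α f hf
    ext A hA
    rw [Measure.map_apply (hTm α) hA, withDensity_apply _ ((hTm α) hA), withDensity_apply _ hA]
    rw [← lintegral_indicator ((hTm α) hA) f, ← lintegral_indicator hA (fun y => f (T α⁻¹ y))]
    have hgm : Measurable fun y => A.indicator (fun z => f (T α⁻¹ z)) y :=
      (hf.comp (hTm α⁻¹)).indicator hA
    have h₂ : ∫⁻ y, A.indicator (fun z => f (T α⁻¹ z)) y ∂(ν α)
        = ∫⁻ y, A.indicator (fun z => f (T α⁻¹ z)) (T α y) ∂μ := by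
      simp only [hν_def]
      exact lintegral_map hgm (hTm α)
    rw [h₂]
    refine lintegral_congr fun y => ?_
    by_cases hy : T α y ∈ A
    · rw [Set.indicator_of_mem hy, Set.indicator_of_mem (show y ∈ T α ⁻¹' A from hy),
        hTinv₂ α y]
    · rw [Set.indicator_of_notMem hy,
        Set.indicator_of_notMem (show y ∉ T α ⁻¹' A from hy)]
  -- chain rule
  have hchain : ∀ α β : G, ν (α * β) = μ.withDensity (D α * (D β ∘ T α⁻¹)) := by
    intro α β
    rw [hmapmap α β, ← hDeq β, hmapwd α (D β) (hDm β), ← hDeq α]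
    exact (withDensity_mul μ (hDm α) ((hDm β).comp (hTm α⁻¹))).symm
  have hchain_ae : ∀ α β : G, D (α * β) =ᵐ[μ] (D α * (D β ∘ T α⁻¹)) := by
    intro α β
    have h₁ := Measure.rnDeriv_withDensity μ
      (show Measurable (D α * (D β ∘ T α⁻¹)) from (hDm α).mul ((hDm β).comp (hTm α⁻¹)))
    rw [← hchain α β] at h₁
    exact h₁
  have hD1 : D 1 =ᵐ[μ] 1 := by
    have : D 1 = μ.rnDeriv μ := by rw [hD_def]; simp only [hν1]
    rw [this]
    exact Measure.rnDeriv_self μ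
  have hDinv : ∀ γ : G, ∀ᵐ y ∂μ, D γ y * D γ⁻¹ (T γ⁻¹ y) = 1 := by
    intro γ
    have h₁ := hchain_ae γ γ⁻¹
    rw [mul_inv_cancel] at h₁
    filter_upwards [h₁, hD1] with y hy1 hy2
    have : D γ y * D γ⁻¹ (T γ⁻¹ y) = D 1 y := hy1.symm
    rw [this, hy2]
    rfl
  have hDpos : ∀ γ : G, ∀ᵐ y ∂μ, D γ y ≠ 0 := by
    intro γ
    filter_upwards [hDinv γ] with y hy h0
    rw [h0, zero_mul] at hy
    exact zero_ne_one hy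
  -- null set transfer
  have hνnull : ∀ (γ : G) (S : Set Y), MeasurableSet S → ν γ S = 0 → μ S = 0 := by
    intro γ S hS h0
    rw [← hDeq γ, withDensity_apply _ hS] at h0
    exact measure_zero_of_lint_zero (hDm γ) (hDpos γ) h0
  have hDid : ∀ h' ∈ G₀, D h' =ᵐ[μ] r h' := by
    intro h' hh'
    have h₁ := Measure.rnDeriv_withDensity μ (hrm h')
    rw [← h1' h' hh'] at h₁
    exact h₁
  -- ===== main argument =====
  intro g
  obtain ⟨gs, hgs0, hgs1, hgs2R⟩ := h2 g
  have hgs2 : ∀ᵐ y ∂μ, Tendsto (fun n => r (gs n) y) atTop (𝓝 (r g y)) :=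
    hgs2R.mono fun y hy => ENNReal.tendsto_ofReal hy
  set v : ℕ → G := fun n => gs n * g⁻¹ with hv_def
  have hv1 : Tendsto v atTop (𝓝 1) := by
    have h₁ : Tendsto (fun n => gs n * g⁻¹) atTop (𝓝 (g * g⁻¹)) :=
      hgs1.mul tendsto_const_nhds
    rwa [mul_inv_cancel] at h₁
  have hvinv1 : Tendsto (fun n => (v n)⁻¹) atTop (𝓝 1) := by
    have h₁ := hv1.inv
    rwa [inv_one] at h₁
  have hvg : ∀ n, v n * g = gs n := fun n => inv_mul_cancel_right _ _
  -- r (v n) (T g y) → 1 for a.e. y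
  have hkey1 : ∀ᵐ y ∂μ, Tendsto (fun n => r (v n) (T g y)) atTop (𝓝 1) := by
    filter_upwards [hgs2, hrpos g] with y hy hpos
    have hid : ∀ n, r (v n) (T g y) = r (gs n) y / r g y := by
      intro n
      have h₁ : r (v n) (T g y) * r g y = r (gs n) y := by
        rw [← hcoc (v n) g y, hvg n]
      rw [ENNReal.eq_div_iff hpos (hrfin g y), mul_comm]
      exact h₁
    have hdiv : Tendsto (fun n => r (gs n) y / r g y) atTop (𝓝 (r g y / r g y)) :=
      ENNReal.Tendsto.mul_const hy (Or.inr (ENNReal.inv_ne_top.mpr hpos))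
    rw [ENNReal.div_self hpos (hrfin g y)] at hdiv
    exact hdiv.congr fun n => (hid n).symm
  -- transfer to an a.e. statement in the variable itself
  have hkey2 : ∀ᵐ z ∂μ, Tendsto (fun n => r (v n) z) atTop (𝓝 1) := by
    set S : Set Y := {z | liminf (fun n => r (v n) z) atTop = 1 ∧
      limsup (fun n => r (v n) z) atTop = 1} with hS
    have hSm : MeasurableSet S := by
      have h₁ : Measurable fun z => liminf (fun n => r (v n) z) atTop :=
        Measurable.liminf fun n => hrm (v n)
      have h₂ : Measurable fun z => limsup (fun n => r (v n) z) atTop :=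
        Measurable.limsup fun n => hrm (v n)
      exact (h₁ (measurableSet_singleton 1)).inter (h₂ (measurableSet_singleton 1))
    have hsub : ∀ᵐ y ∂μ, T g y ∈ S := by
      filter_upwards [hkey1] with y hy
      exact ⟨hy.liminf_eq, hy.limsup_eq⟩
    have h0 : μ {y | T g y ∉ S} = 0 := ae_iff.mp hsub
    have h1₀ : ν g Sᶜ = 0 := by
      rw [hνapp g Sᶜ hSm.compl]
      exact h0
    have h2₀ : μ Sᶜ = 0 := hνnull g Sᶜ hSm.compl h1₀
    have hae : ∀ᵐ z ∂μ, z ∈ S := by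
      rw [ae_iff]
      exact h2₀
    filter_upwards [hae] with z hz
    exact tendsto_of_liminf_eq_limsup hz.1 hz.2
  -- masses converge to 1
  have hc_lim : Tendsto (fun n => ∫⁻ y, r (v n) y ∂μ) atTop (𝓝 1) := by
    have hlower : (1 : ℝ≥0∞) ≤ liminf (fun n => ∫⁻ y, r (v n) y ∂μ) atTop := by
      have hone : (fun _ : Y => (1 : ℝ≥0∞)) =ᵐ[μ] fun z => liminf (fun n => r (v n) z) atTop :=
        hkey2.mono fun z hz => hz.liminf_eq.symm
      calc (1 : ℝ≥0∞) = ∫⁻ _, (1 : ℝ≥0∞) ∂μ := by simp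
        _ = ∫⁻ z, liminf (fun n => r (v n) z) atTop ∂μ := lintegral_congr_ae hone
        _ ≤ liminf (fun n => ∫⁻ y, r (v n) y ∂μ) atTop :=
            lintegral_liminf_le fun n => hrm (v n)
    have hupper : limsup (fun n => ∫⁻ y, r (v n) y ∂μ) atTop ≤ 1 :=
      limsup_le_of_le (by isBoundedDefault)
        (Filter.Eventually.of_forall fun n => hmass_le (v n))
    have hll : liminf (fun n => ∫⁻ y, r (v n) y ∂μ) atTop
        ≤ limsup (fun n => ∫⁻ y, r (v n) y ∂μ) atTop :=
      liminf_le_limsup (by isBoundedDefault) (by isBoundedDefault)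
    exact tendsto_of_liminf_eq_limsup
      (le_antisymm (hll.trans hupper) hlower)
      (le_antisymm hupper (hlower.trans hll))
  -- Scheffé-type estimates for r (v n)
  have hP1 : Tendsto (fun n => ∫⁻ y, (1 - r (v n) y) ∂μ) atTop (𝓝 0) := by
    have h₁ := tendsto_lintegral_of_dominated_convergence (μ := μ)
      (F := fun n y => 1 - r (v n) y) (f := fun _ => (0 : ℝ≥0∞)) (fun _ => (1 : ℝ≥0∞))
      (fun n => measurable_const.sub (hrm (v n)))
      (fun n => Filter.Eventually.of_forall fun y => tsub_le_self)
      (by simp)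
      (by
        filter_upwards [hkey2] with y hy
        have h₂ : Tendsto (fun n => (1 : ℝ≥0∞) - r (v n) y) atTop (𝓝 (1 - 1)) :=
          ENNReal.Tendsto.sub tendsto_const_nhds hy (Or.inl ENNReal.one_ne_top)
        simpa using h₂)
    simpa using h₁
  have hP2 : Tendsto (fun n => ∫⁻ y, (r (v n) y - 1) ∂μ) atTop (𝓝 0) := by
    have heq : ∀ n, ∫⁻ y, (r (v n) y - 1) ∂μ
        = (∫⁻ y, r (v n) y ∂μ) - ∫⁻ y, min (r (v n) y) 1 ∂μ := by
      intro n
      have hminle : (fun y => min (r (v n) y) 1) ≤ᵐ[μ] fun y => r (v n) y :=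
        Filter.Eventually.of_forall fun y => min_le_left _ _
      have hminfin : ∫⁻ y, min (r (v n) y) 1 ∂μ ≠ ∞ := by
        refine (lt_of_le_of_lt (le_trans (lintegral_mono fun y => min_le_right _ _) ?_)
          ENNReal.one_lt_top).ne
        simp
      rw [← lintegral_sub ((hrm (v n)).min measurable_const) hminfin hminle]
      refine lintegral_congr fun y => ?_
      rcases le_total (r (v n) y) 1 with h | h
      · rw [min_eq_left h, tsub_self, tsub_eq_zero_of_le h]
      · rw [min_eq_right h]
    have hmin : Tendsto (fun n => ∫⁻ y, min (r (v n) y) 1 ∂μ) atTop (𝓝 1) := by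
      have h₁ := tendsto_lintegral_of_dominated_convergence (μ := μ)
        (F := fun n y => min (r (v n) y) 1) (f := fun _ => (1 : ℝ≥0∞)) (fun _ => (1 : ℝ≥0∞))
        (fun n => (hrm (v n)).min measurable_const)
        (fun n => Filter.Eventually.of_forall fun y => min_le_right _ _)
        (by simp)
        (by
          filter_upwards [hkey2] with y hy
          have h₂ : Tendsto (fun n => min (r (v n) y) 1) atTop (𝓝 (min 1 1)) :=
            hy.min tendsto_const_nhds
          simpa using h₂)
      simpa using h₁
    have h₃ := ENNReal.Tendsto.sub hc_lim hmin (Or.inl ENNReal.one_ne_top)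
    rw [tsub_self] at h₃
    exact h₃.congr fun n => (heq n).symm
  -- the densities D (v n) approach 1 in L¹
  have hQ1 : Tendsto (fun n => ∫⁻ y, (D (v n) y - 1) ∂μ) atTop (𝓝 0) := by
    have hDr : ∀ n, ∫⁻ y, (D (v n) y - r (v n) y) ∂μ = 1 - ∫⁻ y, r (v n) y ∂μ := by
      intro n
      rw [lintegral_sub (hrm (v n))
        (lt_of_le_of_lt (hmass_le (v n)) ENNReal.one_lt_top).ne (hrleD (v n)), hDmass (v n)]
    have hbound : ∀ n, ∫⁻ y, (D (v n) y - 1) ∂μ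
        ≤ (1 - ∫⁻ y, r (v n) y ∂μ) + ∫⁻ y, (r (v n) y - 1) ∂μ := by
      intro n
      calc ∫⁻ y, (D (v n) y - 1) ∂μ
          ≤ ∫⁻ y, ((D (v n) y - r (v n) y) + (r (v n) y - 1)) ∂μ := by
            refine lintegral_mono fun y => ?_
            have h₁ : D (v n) y - 1 ≤ (D (v n) y - r (v n) y) + (r (v n) y - 1) := by
              rw [tsub_le_iff_right]
              calc D (v n) y ≤ (D (v n) y - r (v n) y) + r (v n) y := le_tsub_add
                _ ≤ (D (v n) y - r (v n) y) + ((r (v n) y - 1) + 1) :=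
                  add_le_add_right le_tsub_add _
                _ = (D (v n) y - r (v n) y) + (r (v n) y - 1) + 1 := (add_assoc _ _ _).symm
            exact h₁
        _ = (∫⁻ y, (D (v n) y - r (v n) y) ∂μ) + ∫⁻ y, (r (v n) y - 1) ∂μ :=
            lintegral_add_left ((hDm (v n)).sub (hrm (v n))) _
        _ = (1 - ∫⁻ y, r (v n) y ∂μ) + ∫⁻ y, (r (v n) y - 1) ∂μ := by rw [hDr n]
    have hlim0 : Tendsto
        (fun n => (1 - ∫⁻ y, r (v n) y ∂μ) + ∫⁻ y, (r (v n) y - 1) ∂μ) atTop (𝓝 0) := by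
      have h₁ : Tendsto (fun n => (1 : ℝ≥0∞) - ∫⁻ y, r (v n) y ∂μ) atTop (𝓝 0) := by
        have h₂ := ENNReal.Tendsto.sub (tendsto_const_nhds (x := (1 : ℝ≥0∞))) hc_lim
          (Or.inl ENNReal.one_ne_top)
        rwa [tsub_self] at h₂
      have h₃ := h₁.add hP2
      rwa [add_zero] at h₃
    exact tendsto_of_tendsto_of_tendsto_of_le_of_le tendsto_const_nhds hlim0
      (fun n => zero_le) hbound
  have hQ2 : Tendsto (fun n => ∫⁻ y, (1 - D (v n) y) ∂μ) atTop (𝓝 0) := by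
    have hbound : ∀ n, ∫⁻ y, (1 - D (v n) y) ∂μ ≤ ∫⁻ y, (1 - r (v n) y) ∂μ := by
      intro n
      refine lintegral_mono_ae ?_
      filter_upwards [hrleD (v n)] with y hy
      exact tsub_le_tsub_left hy 1
    exact tendsto_of_tendsto_of_tendsto_of_le_of_le tendsto_const_nhds hP1
      (fun n => zero_le) hbound
  -- transfer to the inverses
  have hQinv : ∀ δ : G,
      (∫⁻ y, (D δ⁻¹ y - 1) ∂μ = ∫⁻ y, (1 - D δ y) ∂μ) ∧
      (∫⁻ y, (1 - D δ⁻¹ y) ∂μ = ∫⁻ y, (D δ y - 1) ∂μ) := by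
    intro δ
    have hid : ∀ᵐ y ∂μ, D δ⁻¹ y * D δ (T δ y) = 1 := by
      have h₁ := hDinv δ⁻¹
      simp only [inv_inv] at h₁
      exact h₁
    have hid' : ∀ᵐ y ∂μ, D δ⁻¹ y = (D δ (T δ y))⁻¹ := by
      filter_upwards [hid] with y hy
      exact (ENNReal.inv_of_mul_eq_one hy).1
    constructor
    · have h₁ : (fun y => D δ⁻¹ y - 1) =ᵐ[μ] fun y => (D δ (T δ y))⁻¹ - 1 := by
        filter_upwards [hid'] with y hy
        rw [hy]
      have h₂ : (fun y => D δ y * ((D δ y)⁻¹ - 1)) =ᵐ[μ] fun y => 1 - D δ y := by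
        filter_upwards [hDpos δ, hDfin δ] with y hy0 hyt
        rw [ENNReal.mul_sub fun _ _ => hyt, ENNReal.mul_inv_cancel hy0 hyt, mul_one]
      calc ∫⁻ y, (D δ⁻¹ y - 1) ∂μ
          = ∫⁻ y, ((D δ (T δ y))⁻¹ - 1) ∂μ := lintegral_congr_ae h₁
        _ = ∫⁻ y, D δ y * ((D δ y)⁻¹ - 1) ∂μ :=
            hCoV δ (fun z => (D δ z)⁻¹ - 1) ((hDm δ).inv.sub measurable_const)
        _ = ∫⁻ y, (1 - D δ y) ∂μ := lintegral_congr_ae h₂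
    · have h₁ : (fun y => 1 - D δ⁻¹ y) =ᵐ[μ] fun y => 1 - (D δ (T δ y))⁻¹ := by
        filter_upwards [hid'] with y hy
        rw [hy]
      have h₂ : (fun y => D δ y * (1 - (D δ y)⁻¹)) =ᵐ[μ] fun y => D δ y - 1 := by
        filter_upwards [hDpos δ, hDfin δ] with y hy0 hyt
        rw [ENNReal.mul_sub fun _ _ => hyt, ENNReal.mul_inv_cancel hy0 hyt, mul_one]
      calc ∫⁻ y, (1 - D δ⁻¹ y) ∂μ
          = ∫⁻ y, (1 - (D δ (T δ y))⁻¹) ∂μ := lintegral_congr_ae h₁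
        _ = ∫⁻ y, D δ y * (1 - (D δ y)⁻¹) ∂μ :=
            hCoV δ (fun z => 1 - (D δ z)⁻¹) (measurable_const.sub (hDm δ).inv)
        _ = ∫⁻ y, (D δ y - 1) ∂μ := lintegral_congr_ae h₂
  have hQ1' : Tendsto (fun n => ∫⁻ y, (D (v n)⁻¹ y - 1) ∂μ) atTop (𝓝 0) :=
    hQ2.congr fun n => ((hQinv (v n)).1).symm
  have hQ2' : Tendsto (fun n => ∫⁻ y, (1 - D (v n)⁻¹ y) ∂μ) atTop (𝓝 0) :=
    hQ1.congr fun n => ((hQinv (v n)).2).symm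
  -- truncation level
  have hmain : ∀ M : ℕ, ∀ᵐ y ∂μ, min (r g y) (M : ℝ≥0∞) = min (D g y) (M : ℝ≥0∞) := by
    intro M
    set Mc : ℝ≥0∞ := (M : ℝ≥0∞) with hMc_def
    have hMcT : Mc ≠ ∞ := ENNReal.natCast_ne_top M
    set hfun : Y → ℝ≥0∞ := fun y => min (D g y) Mc with hfun_def
    have hfunm : Measurable hfun := (hDm g).min measurable_const
    have hfun_le : ∀ y, hfun y ≤ Mc := fun y => min_le_right _ _
    have hfun_ne : ∀ y, hfun y ≠ ∞ := fun y => fun h => hMcT (top_le_iff.mp (h ▸ hfun_le y))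
    -- approximation of hfun by continuous functions in L¹
    have happrox : ∀ ε : ℝ≥0∞, ε ≠ 0 → ∃ ψ : Y → ℝ≥0∞, Continuous ψ ∧ (∀ y, ψ y ≤ Mc) ∧
        ∫⁻ y, ((hfun y - ψ y) + (ψ y - hfun y)) ∂μ ≤ ε := by
      intro ε hε
      set c : ℝ := Mc.toReal with hc_def
      have hc_nn : 0 ≤ c := ENNReal.toReal_nonneg
      set fR : Y → ℝ := fun y => (hfun y).toReal with hfR_def
      have hfRm : Measurable fR := hfunm.ennreal_toReal
      have hfR_nn : ∀ y, 0 ≤ fR y := fun y => ENNReal.toReal_nonneg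
      have hfR_le : ∀ y, fR y ≤ c := fun y => ENNReal.toReal_mono hMcT (hfun_le y)
      have hfR_int : Integrable fR μ := by
        refine Integrable.mono' (integrable_const c) hfRm.aestronglyMeasurable
          (Filter.Eventually.of_forall fun y => ?_)
        rw [Real.norm_eq_abs, abs_of_nonneg (hfR_nn y)]
        exact hfR_le y
      have hε2 : (ε / 2 : ℝ≥0∞) ≠ 0 := by
        simp only [ne_eq, ENNReal.div_eq_zero_iff, hε, ENNReal.ofNat_ne_top, or_self,
          not_false_eq_true]
      obtain ⟨g0, hg0, -⟩ := hfR_int.exists_boundedContinuous_lintegral_sub_le hε2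
      set cl : ℝ → ℝ := fun t => max 0 (min t c) with hcl_def
      set ψ : Y → ℝ≥0∞ := fun y => ENNReal.ofReal (cl (g0 y)) with hψ_def
      have hψc : Continuous ψ :=
        ENNReal.continuous_ofReal.comp (continuous_const.max (g0.continuous.min continuous_const))
      have hψle : ∀ y, ψ y ≤ Mc := by
        intro y
        have h₁ : cl (g0 y) ≤ c := max_le hc_nn (min_le_right _ _)
        calc ψ y ≤ ENNReal.ofReal c := ENNReal.ofReal_le_ofReal h₁
          _ = Mc := ENNReal.ofReal_toReal hMcT
      refine ⟨ψ, hψc, hψle, ?_⟩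
      have hptw : ∀ y, (hfun y - ψ y) + (ψ y - hfun y) ≤ 2 * (‖fR y - g0 y‖₊ : ℝ≥0∞) := by
        intro y
        have hcl_nn : 0 ≤ cl (g0 y) := le_max_left _ _
        have hclamp : |fR y - cl (g0 y)| ≤ |fR y - g0 y| := by
          rcases le_total (g0 y) 0 with h | h
          · have h₁ : cl (g0 y) = 0 := max_eq_left (le_trans (min_le_left _ _) h)
            rw [h₁, sub_zero, abs_of_nonneg (hfR_nn y),
              abs_of_nonneg (by linarith [hfR_nn y] : (0 : ℝ) ≤ fR y - g0 y)]
            linarith [hfR_nn y]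
          · rcases le_total c (g0 y) with h' | h'
            · have h₁ : cl (g0 y) = c := by
                rw [hcl_def]; simp only [min_eq_right h', max_eq_right hc_nn]
              rw [h₁, abs_of_nonpos (by linarith [hfR_le y] : fR y - c ≤ 0),
                abs_of_nonpos (by linarith [hfR_le y] : fR y - g0 y ≤ 0)]
              linarith
            · have h₁ : cl (g0 y) = g0 y := by
                rw [hcl_def]; simp only [min_eq_left h', max_eq_right h]
              rw [h₁]
        have hfun_eq : hfun y = ENNReal.ofReal (fR y) := (ENNReal.ofReal_toReal (hfun_ne y)).symm
        have h₂ : hfun y - ψ y ≤ (‖fR y - g0 y‖₊ : ℝ≥0∞) := by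
          rw [hfun_eq, hψ_def]
          rw [← ENNReal.ofReal_sub _ hcl_nn]
          rw [← enorm_eq_nnnorm, Real.enorm_eq_ofReal_abs]
          exact ENNReal.ofReal_le_ofReal (le_trans (le_abs_self _) hclamp)
        have h₃ : ψ y - hfun y ≤ (‖fR y - g0 y‖₊ : ℝ≥0∞) := by
          rw [hfun_eq, hψ_def]
          rw [← ENNReal.ofReal_sub _ (hfR_nn y)]
          rw [← enorm_eq_nnnorm, Real.enorm_eq_ofReal_abs]
          refine ENNReal.ofReal_le_ofReal
            (le_trans (le_trans (le_abs_self _) (le_of_eq (abs_sub_comm _ _))) hclamp)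
        calc (hfun y - ψ y) + (ψ y - hfun y) ≤ (‖fR y - g0 y‖₊ : ℝ≥0∞) + ‖fR y - g0 y‖₊ :=
              add_le_add h₂ h₃
          _ = 2 * ‖fR y - g0 y‖₊ := (two_mul _).symm
      calc ∫⁻ y, ((hfun y - ψ y) + (ψ y - hfun y)) ∂μ
          ≤ ∫⁻ y, 2 * (‖fR y - g0 y‖₊ : ℝ≥0∞) ∂μ := lintegral_mono hptw
        _ = 2 * ∫⁻ y, (‖fR y - g0 y‖₊ : ℝ≥0∞) ∂μ :=
            lintegral_const_mul 2 (hfRm.sub g0.continuous.measurable).nnnorm.coe_nnreal_ennreal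
        _ ≤ 2 * (ε / 2) := mul_le_mul_right hg0 2
        _ ≤ ε := ENNReal.mul_div_le
    -- the composed truncated density converges in L¹
    have hE2 : Tendsto (fun n =>
        ∫⁻ y, ((hfun (T (v n)⁻¹ y) - hfun y) + (hfun y - hfun (T (v n)⁻¹ y))) ∂μ) atTop
        (𝓝 0) := by
      rw [ENNReal.tendsto_atTop_zero]
      intro ε hε
      have hε4 : (ε / 4 : ℝ≥0∞) ≠ 0 := by
        simp only [ne_eq, ENNReal.div_eq_zero_iff, hε.ne', false_or]
        exact fun h => (by simp at h)
      obtain ⟨ψ, hψc, hψle, hψerr⟩ := happrox (ε / 4) hε4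
      have hψm : Measurable ψ := hψc.measurable
      set u : Y → ℝ≥0∞ := fun y => (hfun y - ψ y) + (ψ y - hfun y) with hu_def
      have hum : Measurable u := ((hfunm.sub hψm).add (hψm.sub hfunm))
      have hu_bdd : ∀ y, u y ≤ 2 * Mc := by
        intro y
        calc u y ≤ Mc + Mc :=
              add_le_add (le_trans tsub_le_self (hfun_le y)) (le_trans tsub_le_self (hψle y))
          _ = 2 * Mc := (two_mul Mc).symm
      -- term A: change of variables
      have hA : ∀ n, ∫⁻ y, u (T (v n)⁻¹ y) ∂μ
          ≤ (∫⁻ y, u y ∂μ) + (∫⁻ y, (D (v n)⁻¹ y - 1) ∂μ) * (2 * Mc) := by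
        intro n
        rw [hCoV ((v n)⁻¹) u hum]
        calc ∫⁻ y, D (v n)⁻¹ y * u y ∂μ
            ≤ ∫⁻ y, (u y + (D (v n)⁻¹ y - 1) * (2 * Mc)) ∂μ := by
              refine lintegral_mono fun y => ?_
              calc D (v n)⁻¹ y * u y ≤ (1 + (D (v n)⁻¹ y - 1)) * u y := by
                    refine mul_le_mul_left ?_ _
                    calc D (v n)⁻¹ y ≤ (D (v n)⁻¹ y - 1) + 1 := le_tsub_add
                      _ = 1 + (D (v n)⁻¹ y - 1) := add_comm _ _
                _ = u y + (D (v n)⁻¹ y - 1) * u y := by rw [add_mul, one_mul]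
                _ ≤ u y + (D (v n)⁻¹ y - 1) * (2 * Mc) :=
                    add_le_add_right (mul_le_mul_right (hu_bdd y) _) _
          _ = (∫⁻ y, u y ∂μ) + ∫⁻ y, (D (v n)⁻¹ y - 1) * (2 * Mc) ∂μ :=
              lintegral_add_left hum _
          _ = (∫⁻ y, u y ∂μ) + (∫⁻ y, (D (v n)⁻¹ y - 1) ∂μ) * (2 * Mc) := by
              rw [lintegral_mul_const _ (show Measurable fun y => D (v n)⁻¹ y - 1 from
                (hDm ((v n)⁻¹)).sub measurable_const)]
      -- term B: continuity
      have hB : Tendsto (fun n =>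
          ∫⁻ y, ((ψ (T (v n)⁻¹ y) - ψ y) + (ψ y - ψ (T (v n)⁻¹ y))) ∂μ) atTop (𝓝 0) := by
        have h₁ := tendsto_lintegral_of_dominated_convergence (μ := μ)
          (F := fun n y => (ψ (T (v n)⁻¹ y) - ψ y) + (ψ y - ψ (T (v n)⁻¹ y)))
          (f := fun _ => (0 : ℝ≥0∞)) (fun _ => 2 * Mc)
          (fun n => ((hψm.comp (hTm (v n)⁻¹)).sub hψm).add (hψm.sub (hψm.comp (hTm (v n)⁻¹))))
          (fun n => Filter.Eventually.of_forall fun y => by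
            calc (ψ (T (v n)⁻¹ y) - ψ y) + (ψ y - ψ (T (v n)⁻¹ y)) ≤ Mc + Mc :=
                  add_le_add (le_trans tsub_le_self (hψle _)) (le_trans tsub_le_self (hψle _))
              _ = 2 * Mc := (two_mul Mc).symm)
          (by
            have : ∫⁻ _, 2 * Mc ∂μ = 2 * Mc := by simp
            rw [this]
            exact ENNReal.mul_ne_top ENNReal.ofNat_ne_top hMcT)
          (Filter.Eventually.of_forall fun y => by
            have h₂ : Tendsto (fun n => ((v n)⁻¹, y)) atTop (𝓝 (1, y)) :=
              hvinv1.prodMk_nhds tendsto_const_nhds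
            have h₃ : Tendsto (fun n => T (v n)⁻¹ y) atTop (𝓝 y) := by
              have h₄ := (hT.tendsto (1, y)).comp h₂
              rwa [hT1 y] at h₄
            have h₅ : Tendsto (fun n => ψ (T (v n)⁻¹ y)) atTop (𝓝 (ψ y)) :=
              (hψc.tendsto y).comp h₃
            have hψfin : ψ y ≠ ∞ := fun h => hMcT (top_le_iff.mp (h ▸ hψle y))
            have h₆ : Tendsto (fun n => ψ (T (v n)⁻¹ y) - ψ y) atTop (𝓝 (ψ y - ψ y)) :=
              ENNReal.Tendsto.sub h₅ tendsto_const_nhds (Or.inr hψfin)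
            have h₇ : Tendsto (fun n => ψ y - ψ (T (v n)⁻¹ y)) atTop (𝓝 (ψ y - ψ y)) :=
              ENNReal.Tendsto.sub tendsto_const_nhds h₅ (Or.inl hψfin)
            have h₈ := h₆.add h₇
            rwa [tsub_self, add_zero] at h₈)
        simpa using h₁
      -- assemble
      have h2Mc : 2 * Mc ≠ ∞ := ENNReal.mul_ne_top ENNReal.ofNat_ne_top hMcT
      have hT1' : Tendsto (fun n => (∫⁻ y, (D (v n)⁻¹ y - 1) ∂μ) * (2 * Mc)) atTop (𝓝 0) := by
        have h₁ := ENNReal.Tendsto.mul_const hQ1' (Or.inr h2Mc)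
        rwa [zero_mul] at h₁
      obtain ⟨N₁, hN₁⟩ := (ENNReal.tendsto_atTop_zero.mp hT1') (ε / 4)
        (ENNReal.div_pos hε.ne' (by simp))
      obtain ⟨N₂, hN₂⟩ := (ENNReal.tendsto_atTop_zero.mp hB) (ε / 4)
        (ENNReal.div_pos hε.ne' (by simp))
      refine ⟨max N₁ N₂, fun n hn => ?_⟩
      have hn₁ : N₁ ≤ n := le_trans (le_max_left _ _) hn
      have hn₂ : N₂ ≤ n := le_trans (le_max_right _ _) hn
      -- pointwise triangle inequality
      have hptw : ∀ y, (hfun (T (v n)⁻¹ y) - hfun y) + (hfun y - hfun (T (v n)⁻¹ y))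
          ≤ u (T (v n)⁻¹ y) +
            (((ψ (T (v n)⁻¹ y) - ψ y) + (ψ y - ψ (T (v n)⁻¹ y))) + u y) := by
        intro y
        have h₁ := dist2_triangle (hfun (T (v n)⁻¹ y)) (ψ (T (v n)⁻¹ y)) (hfun y)
        have h₂ := dist2_triangle (ψ (T (v n)⁻¹ y)) (ψ y) (hfun y)
        calc (hfun (T (v n)⁻¹ y) - hfun y) + (hfun y - hfun (T (v n)⁻¹ y))
            ≤ ((hfun (T (v n)⁻¹ y) - ψ (T (v n)⁻¹ y)) + (ψ (T (v n)⁻¹ y) - hfun (T (v n)⁻¹ y)))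
              + ((ψ (T (v n)⁻¹ y) - hfun y) + (hfun y - ψ (T (v n)⁻¹ y))) := h₁
          _ ≤ ((hfun (T (v n)⁻¹ y) - ψ (T (v n)⁻¹ y)) + (ψ (T (v n)⁻¹ y) - hfun (T (v n)⁻¹ y)))
              + (((ψ (T (v n)⁻¹ y) - ψ y) + (ψ y - ψ (T (v n)⁻¹ y)))
                + ((ψ y - hfun y) + (hfun y - ψ y))) := add_le_add_right h₂ _
          _ = u (T (v n)⁻¹ y) +
              (((ψ (T (v n)⁻¹ y) - ψ y) + (ψ y - ψ (T (v n)⁻¹ y))) + u y) := by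
              have hu_swap : (ψ y - hfun y) + (hfun y - ψ y) = u y := add_comm _ _
              rw [hu_swap]
      calc ∫⁻ y, ((hfun (T (v n)⁻¹ y) - hfun y) + (hfun y - hfun (T (v n)⁻¹ y))) ∂μ
          ≤ ∫⁻ y, (u (T (v n)⁻¹ y) +
              (((ψ (T (v n)⁻¹ y) - ψ y) + (ψ y - ψ (T (v n)⁻¹ y))) + u y)) ∂μ :=
            lintegral_mono hptw
        _ = (∫⁻ y, u (T (v n)⁻¹ y) ∂μ) +
            ((∫⁻ y, ((ψ (T (v n)⁻¹ y) - ψ y) + (ψ y - ψ (T (v n)⁻¹ y))) ∂μ) +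
              ∫⁻ y, u y ∂μ) := by
            rw [lintegral_add_left (show Measurable fun y => u (T (v n)⁻¹ y) from hum.comp (hTm (v n)⁻¹)),
              lintegral_add_left (show Measurable fun y =>
                  (ψ (T (v n)⁻¹ y) - ψ y) + (ψ y - ψ (T (v n)⁻¹ y)) from
                ((hψm.comp (hTm (v n)⁻¹)).sub hψm).add
                  (hψm.sub (hψm.comp (hTm (v n)⁻¹))))]
        _ ≤ ((∫⁻ y, u y ∂μ) + (∫⁻ y, (D (v n)⁻¹ y - 1) ∂μ) * (2 * Mc)) +
            ((ε / 4) + ∫⁻ y, u y ∂μ) :=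
            add_le_add (hA n) (add_le_add_left (hN₂ n hn₂) _)
        _ ≤ ((ε / 4) + (ε / 4)) + ((ε / 4) + (ε / 4)) :=
            add_le_add (add_le_add hψerr (hN₁ n hn₁)) (add_le_add_right hψerr _)
        _ = 4 * (ε / 4) := by ring
        _ ≤ ε := ENNReal.mul_div_le
    -- a.e. product identity for the approximating densities
    have hAn : ∀ n, ∀ᵐ y ∂μ, r (gs n) y = D (v n) y * D g (T (v n)⁻¹ y) := by
      intro n
      have h₁ : D (gs n) =ᵐ[μ] r (gs n) := hDid (gs n) (hgs0 n)
      have h₂ := hchain_ae (v n) g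
      rw [hvg n] at h₂
      filter_upwards [h₁, h₂] with y hy1 hy2
      rw [← hy1]
      exact hy2
    -- E1 : truncated comparison with the composed density
    have hE1 : Tendsto (fun n => ∫⁻ y,
        ((min (r (gs n) y) Mc - hfun (T (v n)⁻¹ y)) +
          (hfun (T (v n)⁻¹ y) - min (r (gs n) y) Mc)) ∂μ) atTop (𝓝 0) := by
      have hbound : ∀ n, ∫⁻ y,
          ((min (r (gs n) y) Mc - hfun (T (v n)⁻¹ y)) +
            (hfun (T (v n)⁻¹ y) - min (r (gs n) y) Mc)) ∂μ
          ≤ Mc * (∫⁻ y, (D (v n) y - 1) ∂μ) + Mc * ∫⁻ y, (1 - D (v n) y) ∂μ := by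
        intro n
        have h₁ : ∫⁻ y,
            ((min (r (gs n) y) Mc - hfun (T (v n)⁻¹ y)) +
              (hfun (T (v n)⁻¹ y) - min (r (gs n) y) Mc)) ∂μ
            ≤ ∫⁻ y, (Mc * (D (v n) y - 1) + Mc * (1 - D (v n) y)) ∂μ := by
          refine lintegral_mono_ae ?_
          filter_upwards [hAn n] with y hy
          have h₂ := trunc_dist_le (x := D g (T (v n)⁻¹ y)) (w := D (v n) y) hMcT
          rw [← hy] at h₂
          exact h₂
        calc _ ≤ ∫⁻ y, (Mc * (D (v n) y - 1) + Mc * (1 - D (v n) y)) ∂μ := h₁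
          _ = Mc * (∫⁻ y, (D (v n) y - 1) ∂μ) + Mc * ∫⁻ y, (1 - D (v n) y) ∂μ := by
            rw [lintegral_add_left (show Measurable fun y => Mc * (D (v n) y - 1) from
                measurable_const.mul ((hDm (v n)).sub measurable_const)),
              lintegral_const_mul Mc (show Measurable fun y => D (v n) y - 1 from
                (hDm (v n)).sub measurable_const),
              lintegral_const_mul Mc (show Measurable fun y => 1 - D (v n) y from
                measurable_const.sub (hDm (v n)))]
      have hlim0 : Tendsto (fun n =>
          Mc * (∫⁻ y, (D (v n) y - 1) ∂μ) + Mc * ∫⁻ y, (1 - D (v n) y) ∂μ) atTop (𝓝 0) := by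
        have h₁ := (ENNReal.Tendsto.const_mul hQ1 (Or.inr hMcT)).add
          (ENNReal.Tendsto.const_mul hQ2 (Or.inr hMcT))
        rwa [mul_zero, add_zero] at h₁
      exact tendsto_of_tendsto_of_tendsto_of_le_of_le tendsto_const_nhds hlim0
        (fun n => zero_le) hbound
    -- E3 : truncations converge
    have hE3 : Tendsto (fun n => ∫⁻ y,
        ((min (r g y) Mc - min (r (gs n) y) Mc) +
          (min (r (gs n) y) Mc - min (r g y) Mc)) ∂μ) atTop (𝓝 0) := by
      have h₁ := tendsto_lintegral_of_dominated_convergence (μ := μ)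
        (F := fun n y => (min (r g y) Mc - min (r (gs n) y) Mc) +
          (min (r (gs n) y) Mc - min (r g y) Mc))
        (f := fun _ => (0 : ℝ≥0∞)) (fun _ => 2 * Mc)
        (fun n => (((hrm g).min measurable_const).sub ((hrm (gs n)).min measurable_const)).add
          (((hrm (gs n)).min measurable_const).sub ((hrm g).min measurable_const)))
        (fun n => Filter.Eventually.of_forall fun y => by
          calc (min (r g y) Mc - min (r (gs n) y) Mc) +
              (min (r (gs n) y) Mc - min (r g y) Mc) ≤ Mc + Mc :=
                add_le_add (le_trans tsub_le_self (min_le_right _ _))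
                  (le_trans tsub_le_self (min_le_right _ _))
            _ = 2 * Mc := (two_mul Mc).symm)
        (by
          have : ∫⁻ _, 2 * Mc ∂μ = 2 * Mc := by simp
          rw [this]
          exact ENNReal.mul_ne_top ENNReal.ofNat_ne_top hMcT)
        (by
          filter_upwards [hgs2] with y hy
          have hfin : min (r g y) Mc ≠ ∞ := fun h => hMcT (top_le_iff.mp (h ▸ min_le_right _ _))
          have h₂ : Tendsto (fun n => min (r (gs n) y) Mc) atTop (𝓝 (min (r g y) Mc)) :=
            hy.min tendsto_const_nhds
          have h₃ : Tendsto (fun n => min (r g y) Mc - min (r (gs n) y) Mc) atTop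
              (𝓝 (min (r g y) Mc - min (r g y) Mc)) :=
            ENNReal.Tendsto.sub tendsto_const_nhds h₂ (Or.inl hfin)
          have h₄ : Tendsto (fun n => min (r (gs n) y) Mc - min (r g y) Mc) atTop
              (𝓝 (min (r g y) Mc - min (r g y) Mc)) :=
            ENNReal.Tendsto.sub h₂ tendsto_const_nhds (Or.inr hfin)
          have h₅ := h₃.add h₄
          rwa [tsub_self, add_zero] at h₅)
      simpa using h₁
    -- the total distance vanishes
    have hzero : ∫⁻ y, ((min (r g y) Mc - hfun y) + (hfun y - min (r g y) Mc)) ∂μ = 0 := by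
      have hle : ∀ n, ∫⁻ y, ((min (r g y) Mc - hfun y) + (hfun y - min (r g y) Mc)) ∂μ
          ≤ (∫⁻ y, ((min (r g y) Mc - min (r (gs n) y) Mc) +
              (min (r (gs n) y) Mc - min (r g y) Mc)) ∂μ) +
            ((∫⁻ y, ((min (r (gs n) y) Mc - hfun (T (v n)⁻¹ y)) +
              (hfun (T (v n)⁻¹ y) - min (r (gs n) y) Mc)) ∂μ) +
              ∫⁻ y, ((hfun (T (v n)⁻¹ y) - hfun y) + (hfun y - hfun (T (v n)⁻¹ y))) ∂μ) := by
        intro n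
        have hptw : ∀ y, (min (r g y) Mc - hfun y) + (hfun y - min (r g y) Mc)
            ≤ ((min (r g y) Mc - min (r (gs n) y) Mc) +
                (min (r (gs n) y) Mc - min (r g y) Mc)) +
              (((min (r (gs n) y) Mc - hfun (T (v n)⁻¹ y)) +
                (hfun (T (v n)⁻¹ y) - min (r (gs n) y) Mc)) +
                ((hfun (T (v n)⁻¹ y) - hfun y) + (hfun y - hfun (T (v n)⁻¹ y)))) := by
          intro y
          have h₁ := dist2_triangle (min (r g y) Mc) (min (r (gs n) y) Mc) (hfun y)
          have h₂ := dist2_triangle (min (r (gs n) y) Mc) (hfun (T (v n)⁻¹ y)) (hfun y)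
          exact le_trans h₁ (add_le_add_right h₂ _)
        calc _ ≤ ∫⁻ y, (((min (r g y) Mc - min (r (gs n) y) Mc) +
                (min (r (gs n) y) Mc - min (r g y) Mc)) +
              (((min (r (gs n) y) Mc - hfun (T (v n)⁻¹ y)) +
                (hfun (T (v n)⁻¹ y) - min (r (gs n) y) Mc)) +
                ((hfun (T (v n)⁻¹ y) - hfun y) + (hfun y - hfun (T (v n)⁻¹ y))))) ∂μ :=
              lintegral_mono hptw
          _ = _ := by
              rw [lintegral_add_left (show Measurable fun y =>
                    (min (r g y) Mc - min (r (gs n) y) Mc) +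
                      (min (r (gs n) y) Mc - min (r g y) Mc) from
                  (((hrm g).min measurable_const).sub ((hrm (gs n)).min measurable_const)).add
                    (((hrm (gs n)).min measurable_const).sub ((hrm g).min measurable_const))),
                lintegral_add_left (show Measurable fun y =>
                    (min (r (gs n) y) Mc - hfun (T (v n)⁻¹ y)) +
                      (hfun (T (v n)⁻¹ y) - min (r (gs n) y) Mc) from
                  (((hrm (gs n)).min measurable_const).sub (hfunm.comp (hTm (v n)⁻¹))).add
                    ((hfunm.comp (hTm (v n)⁻¹)).sub ((hrm (gs n)).min measurable_const)))]
      have hsum : Tendsto (fun n =>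
          (∫⁻ y, ((min (r g y) Mc - min (r (gs n) y) Mc) +
              (min (r (gs n) y) Mc - min (r g y) Mc)) ∂μ) +
            ((∫⁻ y, ((min (r (gs n) y) Mc - hfun (T (v n)⁻¹ y)) +
              (hfun (T (v n)⁻¹ y) - min (r (gs n) y) Mc)) ∂μ) +
              ∫⁻ y, ((hfun (T (v n)⁻¹ y) - hfun y) + (hfun y - hfun (T (v n)⁻¹ y))) ∂μ)) atTop
          (𝓝 0) := by
        have h₁ := hE3.add (hE1.add hE2)
        rwa [add_zero, add_zero] at h₁
      have h₂ := ge_of_tendsto' hsum hle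
      exact le_antisymm h₂ zero_le
    -- conclude the a.e. equality of truncations
    have hdm : Measurable fun y =>
        (min (r g y) Mc - hfun y) + (hfun y - min (r g y) Mc) :=
      (((hrm g).min measurable_const).sub hfunm).add (hfunm.sub ((hrm g).min measurable_const))
    have h0ae := (lintegral_eq_zero_iff hdm).mp hzero
    filter_upwards [h0ae] with y hy
    have hy' : (min (r g y) Mc - hfun y) + (hfun y - min (r g y) Mc) = 0 := hy
    rw [add_eq_zero] at hy'
    exact le_antisymm (tsub_eq_zero_iff_le.mp hy'.1) (tsub_eq_zero_iff_le.mp hy'.2)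


  have hfinal : r g =ᵐ[μ] D g := by
    have hall : ∀ᵐ y ∂μ, ∀ M : ℕ, min (r g y) (M : ℝ≥0∞) = min (D g y) (M : ℝ≥0∞) :=
      (ae_all_iff).mpr hmain
    filter_upwards [hall] with y hy
    exact eq_of_min_nat_eq (hrfin g y) hy
  calc Measure.map (T g) μ = ν g := rfl
    _ = μ.withDensity (D g) := (hDeq g).symm
    _ = μ.withDensity (r g) := withDensity_congr_ae hfinal.symm
    _ = μ.withDensity fun y => ENNReal.ofReal (R g y) := rfl
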